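/- Fix 0 < τ ≤ 1 and let g_t be as above with ‖g‖²_{1/2} := (1/(2π²)) ∫|u||ĝ(u)|²du. Then for every 0 < δ < 1 there is a constant C(δ) such that for all t, s ∈ [0,1], ‖g_t − g_s‖²_{1/2} ≤ C(δ) |t−s|^{1+δ}. -/

import Mathlib

open MeasureTheory

/-- Fourier transform with the convention `ĝ(u) = ∫ g(x) e^{−iux} dx`. -/
noncomputable def fourierT (h : ℝ → ℝ) (t : ℝ) : ℂ :=
  ∫ x : ℝ, (h x : ℂ) * Complex.exp (-(Complex.I * t * x))

/-- `g_t(x) = ∫₀^t 1_{[0,s]}(x) ds − (t/τ) ∫₀^τ 1_{[0,s]}(x) ds`. -/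
noncomputable def gfun (τ t x : ℝ) : ℝ :=
  (∫ s in (0:ℝ)..t, Set.indicator (Set.Icc 0 s) (fun _ => (1:ℝ)) x) -
    t / τ * ∫ s in (0:ℝ)..τ, Set.indicator (Set.Icc 0 s) (fun _ => (1:ℝ)) x

/-!
With the tent `p_a(x) = (a - x)` on `[0, a]` one has `g_t = p_t - (t/τ) p_τ` and
`p̂_a(u) = (1 - e^{-iua} - iua) / u²`, so `ĝ_t(u) - ĝ_s(u) = N(u) / u²` with
`N = e^{-ius} - e^{-iut} + ((t - s)/τ) (e^{-iuτ} - 1)`. Expanding the exponentials to first and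
second order gives `|N| ≲ u² |t - s|`, `|N| ≤ 2 |u| |t - s|` and `|N| ≲ 1/τ`, hence
`|ĝ_t - ĝ_s| ≲ |t - s| / (1 + |u|)` and `|ĝ_t - ĝ_s| ≲ 1 / (τ (1 + |u|)²)`. Interpolating the
two with weights `1 + δ` and `1 - δ` bounds `|u| |ĝ_t - ĝ_s|²` by `|t - s|^{1+δ} (1 + |u|)^{δ-2}`,
which is integrable because `δ < 1`.
-/

open Set Complex Real

lemma norm_exp_I_mul_ofReal_sub_one_sub_le (θ : ℝ) : ‖exp (I * θ) - 1 - I * θ‖ ≤ 2 * θ ^ 2 := by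
  rcases le_or_gt |θ| 1 with hθ | hθ
  · have h := norm_exp_sub_one_sub_id_le (x := I * θ) (by simpa using hθ)
    simp only [norm_mul, norm_I, one_mul, norm_real, Real.norm_eq_abs, sq_abs] at h
    linarith [sq_nonneg θ]
  · calc ‖exp (I * θ) - 1 - I * θ‖ ≤ ‖exp (I * θ) - 1‖ + ‖I * θ‖ := norm_sub_le _ _
      _ ≤ |θ| + |θ| := by
          gcongr
          · simpa using Real.norm_exp_I_mul_ofReal_sub_one_le (x := θ)
          · simp
      _ ≤ 2 * θ ^ 2 := by nlinarith [sq_abs θ]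

lemma mul_sq_le_of_mul_le_of_mul_sq_le {r w a b δ : ℝ} (hr : 0 ≤ r) (hw : 0 < w)
    (ha : r * w ≤ a) (hb : r * w ^ 2 ≤ b) (hδ₀ : -1 ≤ δ) (hδ₁ : δ ≤ 1) :
    w * r ^ 2 ≤ a ^ (1 + δ) * b ^ (1 - δ) * w ^ (δ - 2) := by
  have hsplit : (r * w) ^ (1 + δ) * (r * w ^ 2) ^ (1 - δ) * w ^ (δ - 2) =
      r ^ ((1 + δ) + (1 - δ)) * w ^ ((1 + δ) + 2 * (1 - δ) + (δ - 2)) := by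
    rw [rpow_add' hr (by norm_num), rpow_add hw, rpow_add hw, mul_rpow hr hw.le,
      mul_rpow hr (by positivity), rpow_mul hw.le, rpow_two]
    ring
  calc w * r ^ 2 = (r * w) ^ (1 + δ) * (r * w ^ 2) ^ (1 - δ) * w ^ (δ - 2) := by
        rw [hsplit, show (1 + δ) + (1 - δ) = (2 : ℝ) by ring,
          show (1 + δ) + 2 * (1 - δ) + (δ - 2) = (1 : ℝ) by ring, rpow_two, rpow_one, mul_comm]
    _ ≤ a ^ (1 + δ) * b ^ (1 - δ) * w ^ (δ - 2) := by
        have ha₀ : 0 ≤ a := (mul_nonneg hr hw.le).trans ha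
        gcongr
        linarith

noncomputable def wave (u x : ℝ) : ℂ := exp (-(I * u * x))

lemma wave_eq_exp_I_mul (u x : ℝ) : wave u x = exp (I * (-(u * x) : ℝ)) := by
  rw [wave]; push_cast; ring_nf

lemma norm_wave (u x : ℝ) : ‖wave u x‖ = 1 := by
  rw [wave_eq_exp_I_mul, mul_comm, norm_exp_ofReal_mul_I]

lemma wave_add (u x y : ℝ) : wave u (x + y) = wave u x * wave u y := by
  simp only [wave, ← Complex.exp_add]; push_cast; ring_nf

lemma norm_wave_sub_one_le (u x : ℝ) : ‖wave u x - 1‖ ≤ |u| * |x| := by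
  simpa [wave_eq_exp_I_mul, abs_mul] using Real.norm_exp_I_mul_ofReal_sub_one_le (x := -(u * x))

lemma norm_wave_sub_one_add_le (u x : ℝ) : ‖wave u x - 1 + I * u * x‖ ≤ 2 * (u * x) ^ 2 := by
  have h := norm_exp_I_mul_ofReal_sub_one_sub_le (-(u * x))
  rw [← wave_eq_exp_I_mul, neg_sq] at h
  convert h using 2
  push_cast; ring

noncomputable def tent (a : ℝ) : ℝ → ℝ := (Icc 0 a).indicator (a - ·)

lemma intervalIntegral_indicator_Icc_eq_tent {a : ℝ} (ha : 0 ≤ a) (x : ℝ) :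
    ∫ s in (0:ℝ)..a, (Icc 0 s).indicator (fun _ => (1:ℝ)) x = tent a x := by
  rcases lt_or_ge x 0 with hx | hx
  · have hx' : x ∉ Icc 0 a := fun h => hx.not_ge h.1
    simp [tent, hx', fun s => show x ∉ Icc 0 s from fun h => hx.not_ge h.1]
  have hind : (fun s => (Icc 0 s).indicator (fun _ => (1:ℝ)) x) = (Ici x).indicator 1 := by
    ext s; by_cases hs : x ≤ s <;> simp [hs, hx]
  rw [hind, intervalIntegral.integral_of_le ha, ← integral_Icc_eq_integral_Ioc,
    integral_indicator_one measurableSet_Ici, measureReal_restrict_apply measurableSet_Ici,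
    show Ici x ∩ Icc 0 a = Icc x a by ext y; simp only [mem_inter_iff, mem_Ici, mem_Icc]; grind,
    Real.volume_real_Icc]
  by_cases hxa : x ≤ a
  · simp [tent, hx, hxa]
  · simp [tent, hxa, (not_le.1 hxa).le]

lemma gfun_eq_tent {τ t : ℝ} (hτ : 0 ≤ τ) (ht : 0 ≤ t) : gfun τ t = tent t - (t / τ) • tent τ := by
  ext x
  simp [gfun, intervalIntegral_indicator_Icc_eq_tent hτ, intervalIntegral_indicator_Icc_eq_tent ht]

lemma tent_mul_exp_eq_indicator (a u : ℝ) :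
    (fun x : ℝ => (tent a x : ℂ) * exp (-(I * u * x))) =
      (Icc 0 a).indicator (fun x : ℝ => (a - x : ℂ) * exp (-(I * u * x))) := by
  ext x
  by_cases hx : x ∈ Icc 0 a <;> simp [tent, hx]

lemma integrable_tent_mul_exp (a u : ℝ) :
    Integrable (fun x : ℝ => (tent a x : ℂ) * exp (-(I * u * x))) := by
  rw [tent_mul_exp_eq_indicator, integrable_indicator_iff measurableSet_Icc]
  exact (by fun_prop : Continuous _).integrableOn_Icc

lemma fourierT_tent {a u : ℝ} (ha : 0 ≤ a) (hu : u ≠ 0) :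
    fourierT (tent a) u = (1 - wave u a - I * u * a) / u ^ 2 := by
  have hu' : (u : ℂ) ≠ 0 := ofReal_ne_zero.2 hu
  set F : ℝ → ℂ := fun x => exp (-(I * u * x)) * ((a - x) * (I / u) - 1 / u ^ 2)
  have hF : ∀ x : ℝ, HasDerivAt F ((a - x) * exp (-(I * u * x))) x := by
    intro x
    have hx : HasDerivAt (fun x : ℝ => (x : ℂ)) 1 x := by
      simpa using (hasDerivAt_id x).ofReal_comp
    refine (((hx.const_mul (I * u)).neg.cexp).mul (((hx.const_sub (a : ℂ)).mul_const
      (I / u)).sub_const (1 / (u : ℂ) ^ 2))).congr_deriv ?_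
    simp only [Pi.neg_apply]
    field_simp
    ring_nf
    simp only [I_sq]
    ring
  rw [fourierT, tent_mul_exp_eq_indicator, integral_indicator measurableSet_Icc,
    integral_Icc_eq_integral_Ioc, ← intervalIntegral.integral_of_le ha,
    intervalIntegral.integral_eq_sub_of_hasDerivAt (fun x _ => hF x)
      ((by fun_prop : Continuous _).intervalIntegrable 0 a)]
  simp only [F, wave, ofReal_zero, mul_zero, neg_zero, Complex.exp_zero, sub_zero, sub_self,
    zero_mul, one_mul]
  field_simp
  ring

lemma fourierT_gfun {τ t u : ℝ} (hτ : 0 ≤ τ) (ht : 0 ≤ t) :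
    fourierT (gfun τ t) u = fourierT (tent t) u - (t / τ : ℝ) * fourierT (tent τ) u := by
  rw [fourierT, fourierT, fourierT, ← integral_const_mul,
    ← integral_sub (integrable_tent_mul_exp t u) ((integrable_tent_mul_exp τ u).const_mul _)]
  congr 1 with x
  simp only [gfun_eq_tent hτ ht, Pi.sub_apply, Pi.smul_apply, smul_eq_mul]
  push_cast
  ring

noncomputable def gfunNum (τ t s u : ℝ) : ℂ :=
  wave u s - wave u t + ((t - s) / τ : ℝ) * (wave u τ - 1)

lemma fourierT_gfun_sub_fourierT_gfun {τ t s u : ℝ} (hτ : 0 < τ) (ht : 0 ≤ t) (hs : 0 ≤ s)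
    (hu : u ≠ 0) :
    fourierT (gfun τ t) u - fourierT (gfun τ s) u = gfunNum τ t s u / u ^ 2 := by
  rw [fourierT_gfun hτ.le ht, fourierT_gfun hτ.le hs, fourierT_tent ht hu, fourierT_tent hs hu,
    fourierT_tent hτ.le hu, gfunNum]
  have hτ' : (τ : ℂ) ≠ 0 := ofReal_ne_zero.2 hτ.ne'
  push_cast
  field_simp
  ring

lemma norm_gfunNum_le_two_mul {τ : ℝ} (hτ : 0 < τ) (t s u : ℝ) :
    ‖gfunNum τ t s u‖ ≤ 2 * |u| * |t - s| := by
  have hdiff : ‖wave u s - wave u t‖ ≤ |u| * |t - s| := by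
    rw [show t = s + (t - s) by ring, wave_add, ← mul_one_sub, norm_mul, norm_wave, one_mul,
      norm_sub_rev, add_sub_cancel_left]
    exact norm_wave_sub_one_le u (t - s)
  calc ‖gfunNum τ t s u‖ ≤ ‖wave u s - wave u t‖ + |t - s| / τ * ‖wave u τ - 1‖ := by
        refine (norm_add_le _ _).trans_eq ?_
        rw [norm_mul, norm_real, Real.norm_eq_abs, abs_div, abs_of_pos hτ]
    _ ≤ |u| * |t - s| + |t - s| / τ * (|u| * τ) := by
        gcongr
        exact (norm_wave_sub_one_le u τ).trans_eq (by rw [abs_of_pos hτ])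
    _ = 2 * |u| * |t - s| := by field_simp; ring

lemma norm_gfunNum_le_two_add {τ : ℝ} (hτ : 0 < τ) (t s u : ℝ) :
    ‖gfunNum τ t s u‖ ≤ 2 + 2 * |t - s| / τ := by
  calc ‖gfunNum τ t s u‖ ≤ (‖wave u s‖ + ‖wave u t‖) + |t - s| / τ * (‖wave u τ‖ + ‖(1 : ℂ)‖) := by
        refine (norm_add_le _ _).trans ?_
        rw [norm_mul, norm_real, Real.norm_eq_abs, abs_div, abs_of_pos hτ]
        gcongr <;> exact norm_sub_le _ _
    _ = 2 + 2 * |t - s| / τ := by simp only [norm_wave, norm_one]; ring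

lemma norm_gfunNum_le_sq_mul {τ : ℝ} (hτ : 0 < τ) (t s u : ℝ) :
    ‖gfunNum τ t s u‖ ≤ u ^ 2 * |t - s| * (|s| + 2 * |t - s| + 2 * τ) := by
  have hτ' : (τ : ℂ) ≠ 0 := ofReal_ne_zero.2 hτ.ne'
  have hsplit : gfunNum τ t s u = I * u * (t - s) * (wave u s - 1) -
      wave u s * (wave u (t - s) - 1 + I * u * (t - s : ℝ)) +
      ((t - s) / τ : ℝ) * (wave u τ - 1 + I * u * τ) := by
    rw [gfunNum, show t = s + (t - s) by ring, wave_add, add_sub_cancel_left]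
    push_cast
    field_simp
    ring
  have hc : ‖(((t - s) / τ : ℝ) : ℂ)‖ = |t - s| / τ := by
    rw [norm_real, Real.norm_eq_abs, abs_div, abs_of_pos hτ]
  calc ‖gfunNum τ t s u‖ ≤ |u| * |t - s| * (|u| * |s|) + 1 * (2 * (u * (t - s)) ^ 2)
        + |t - s| / τ * (2 * (u * τ) ^ 2) := by
        rw [hsplit]
        refine (norm_add_le _ _).trans (add_le_add ((norm_sub_le _ _).trans (add_le_add ?_ ?_)) ?_)
        · rw [norm_mul]
          gcongr
          · simp [← ofReal_sub]
          · exact norm_wave_sub_one_le u s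
        · rw [norm_mul, norm_wave]
          gcongr
          exact norm_wave_sub_one_add_le u (t - s)
        · rw [norm_mul, hc]
          gcongr
          exact norm_wave_sub_one_add_le u τ
    _ = u ^ 2 * |t - s| * (|s| + 2 * |t - s| + 2 * τ) := by
        rw [mul_pow, mul_pow, ← sq_abs (t - s), ← sq_abs u]
        field_simp

lemma norm_fourierT_gfun_sub_mul_le {τ t s u : ℝ} (hτ₀ : 0 < τ) (hτ₁ : τ ≤ 1)
    (ht : t ∈ Icc (0 : ℝ) 1) (hs : s ∈ Icc (0 : ℝ) 1) (hu : u ≠ 0) :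
    ‖fourierT (gfun τ t) u - fourierT (gfun τ s) u‖ * (1 + |u|) ≤ 7 * |t - s| ∧
      ‖fourierT (gfun τ t) u - fourierT (gfun τ s) u‖ * (1 + |u|) ^ 2 ≤ 13 / τ := by
  have hr : ‖fourierT (gfun τ t) u - fourierT (gfun τ s) u‖ * u ^ 2 = ‖gfunNum τ t s u‖ := by
    rw [fourierT_gfun_sub_fourierT_gfun hτ₀ ht.1 hs.1 hu, norm_div, norm_pow, norm_real,
      Real.norm_eq_abs, sq_abs, div_mul_cancel₀ _ (by positivity)]
  set r := ‖fourierT (gfun τ t) u - fourierT (gfun τ s) u‖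
  have hu₀ : 0 < |u| := abs_pos.2 hu
  have hd : |t - s| ≤ 1 := abs_sub_le_iff.2 ⟨by linarith [ht.2, hs.1], by linarith [ht.1, hs.2]⟩
  have hs' : |s| ≤ 1 := abs_le.2 ⟨by linarith [hs.1], hs.2⟩
  have hr₀ : r ≤ 5 * |t - s| := by
    have h := hr ▸ norm_gfunNum_le_sq_mul hτ₀ t s u
    have : r * u ^ 2 ≤ 5 * |t - s| * u ^ 2 := by
      nlinarith [abs_nonneg (t - s), sq_nonneg u, mul_nonneg (sq_nonneg u) (abs_nonneg (t - s))]
    exact le_of_mul_le_mul_right this (by positivity)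
  have hr₁ : r * |u| ≤ 2 * |t - s| := by
    have h := hr ▸ norm_gfunNum_le_two_mul hτ₀ t s u
    rw [← sq_abs u] at h
    exact le_of_mul_le_mul_right (by nlinarith) hu₀
  have hr₂ : r * u ^ 2 ≤ 4 / τ := by
    have h := hr ▸ norm_gfunNum_le_two_add hτ₀ t s u
    have : 2 * |t - s| / τ ≤ 2 / τ := by gcongr; linarith
    have : 2 ≤ 2 / τ := by rw [le_div_iff₀ hτ₀]; linarith
    linarith [show 2 / τ + 2 / τ = 4 / τ by ring]
  have h5 : 5 ≤ 5 / τ := by rw [le_div_iff₀ hτ₀]; linarith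
  have h4 : 4 ≤ 4 / τ := by rw [le_div_iff₀ hτ₀]; linarith
  constructor
  · nlinarith
  · have : r * (1 + |u|) ^ 2 = r + 2 * (r * |u|) + r * u ^ 2 := by rw [← sq_abs u]; ring
    have : 5 / τ + 4 / τ + 4 / τ = 13 / τ := by ring
    nlinarith

lemma abs_mul_norm_fourierT_gfun_sub_sq_le {τ δ t s : ℝ} (hτ₀ : 0 < τ) (hτ₁ : τ ≤ 1)
    (hδ₀ : -1 ≤ δ) (hδ₁ : δ ≤ 1) (ht : t ∈ Icc (0 : ℝ) 1) (hs : s ∈ Icc (0 : ℝ) 1) (u : ℝ) :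
    |u| * ‖fourierT (gfun τ t) u - fourierT (gfun τ s) u‖ ^ 2 ≤
      (7 * |t - s|) ^ (1 + δ) * (13 / τ) ^ (1 - δ) * (1 + |u|) ^ (δ - 2) := by
  rcases eq_or_ne u 0 with rfl | hu
  · simp only [abs_zero, zero_mul]
    positivity
  obtain ⟨h₁, h₂⟩ := norm_fourierT_gfun_sub_mul_le hτ₀ hτ₁ ht hs hu
  calc |u| * ‖fourierT (gfun τ t) u - fourierT (gfun τ s) u‖ ^ 2
      ≤ (1 + |u|) * ‖fourierT (gfun τ t) u - fourierT (gfun τ s) u‖ ^ 2 := by gcongr; linarith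
    _ ≤ _ := mul_sq_le_of_mul_le_of_mul_sq_le (norm_nonneg _) (by positivity) h₁ h₂ hδ₀ hδ₁

/-- Hölder-type modulus of continuity of `t ↦ g_t` in the homogeneous `H^{1/2}` seminorm:
for every `0 < δ < 1` there is `C(δ)` such that for all `t, s ∈ [0,1]`,
`‖g_t − g_s‖²_{1/2} ≤ C(δ) |t−s|^{1+δ}`, where
`‖g‖²_{1/2} = (1/(2π²)) ∫ |u| |ĝ(u)|² du`. -/
theorem stmt_12 (τ : ℝ) (hτ0 : 0 < τ) (hτ1 : τ ≤ 1) (δ : ℝ) (hδ0 : 0 < δ) (hδ1 : δ < 1) :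
    ∃ C : ℝ, 0 < C ∧ ∀ t ∈ Set.Icc (0:ℝ) 1, ∀ s ∈ Set.Icc (0:ℝ) 1,
      1 / (2 * Real.pi ^ 2) *
          (∫ u : ℝ, |u| * ‖fourierT (gfun τ t) u - fourierT (gfun τ s) u‖ ^ 2) ≤
        C * |t - s| ^ (1 + δ) := by
  have hint : Integrable fun u : ℝ => (1 + |u|) ^ (δ - 2) := by
    have h := integrable_one_add_norm (E := ℝ) (μ := volume) (r := 2 - δ)
      (by rw [Module.finrank_self]; push_cast; linarith)
    simpa only [Real.norm_eq_abs, neg_sub] using h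
  set J := ∫ u : ℝ, (1 + |u|) ^ (δ - 2)
  have hJ : 0 < J := by
    refine (integral_pos_iff_support_of_nonneg (fun u => by positivity) hint).2 ?_
    have hne (u : ℝ) : (1 + |u|) ^ (δ - 2) ≠ 0 := (rpow_pos_of_pos (by positivity) _).ne'
    simp [Function.support, hne]
  refine ⟨1 / (2 * π ^ 2) * (7 ^ (1 + δ) * (13 / τ) ^ (1 - δ) * J), by positivity, ?_⟩
  intro t ht s hs
  have hbound := integral_mono_of_nonneg (Filter.Eventually.of_forall fun u => by positivity)
    (hint.const_mul ((7 * |t - s|) ^ (1 + δ) * (13 / τ) ^ (1 - δ)))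
    (Filter.Eventually.of_forall (abs_mul_norm_fourierT_gfun_sub_sq_le hτ0 hτ1 (by linarith)
      hδ1.le ht hs))
  rw [integral_const_mul, mul_rpow (by norm_num) (abs_nonneg _)] at hbound
  calc _ ≤ 1 / (2 * π ^ 2) * (7 ^ (1 + δ) * |t - s| ^ (1 + δ) * (13 / τ) ^ (1 - δ) * J) := by
        gcongr
    _ = _ := by ring
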